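/- arXiv:1702.03223 — 7 statements merged into one kernel-verified Lean document; each statement's English description precedes it below -/
import Mathlib

section
/- Let R be an involutive symmetry on V⊗V (i.e. R satisfies the braid relation R₁₂R₂₃R₁₂ = R₂₃R₁₂R₂₃ and R² = I) and let a ∈ ℂ be nonzero. For u ≠ v define the current R-matrix R(u,v) := R − (a/(u−v))·I. Then for all pairwise distinct u, v, w ∈ ℂ the quantum Yang–Baxter equation with parameters holds: R₁₂(u,v) R₂₃(u,w) R₁₂(v,w) = R₂₃(v,w) R₁₂(u,w) R₂₃(u,v). -/
/-- For an operator `X` on `V ⊗ V` (`V = ℂ^m`), the induced operator `X₁₂ = X ⊗ I`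
on `V ⊗ V ⊗ V`. -/
def amp12 {m : ℕ} (X : Matrix (Fin m × Fin m) (Fin m × Fin m) ℂ) :
    Matrix (Fin m × Fin m × Fin m) (Fin m × Fin m × Fin m) ℂ :=
  Matrix.of fun p q => X (p.1, p.2.1) (q.1, q.2.1) * (if p.2.2 = q.2.2 then 1 else 0)

/-- For an operator `X` on `V ⊗ V`, the induced operator `X₂₃ = I ⊗ X` on `V ⊗ V ⊗ V`. -/
def amp23 {m : ℕ} (X : Matrix (Fin m × Fin m) (Fin m × Fin m) ℂ) :
    Matrix (Fin m × Fin m × Fin m) (Fin m × Fin m × Fin m) ℂ :=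
  Matrix.of fun p q => (if p.1 = q.1 then 1 else 0) * X p.2 q.2

lemma amp12_mul {m : ℕ} (X Y : Matrix (Fin m × Fin m) (Fin m × Fin m) ℂ) :
    amp12 (X * Y) = amp12 X * amp12 Y := by
  ext ⟨i,j,k⟩ ⟨i',j',k'⟩
  simp [amp12, Matrix.mul_apply, Fintype.sum_prod_type, mul_ite, ite_mul, Finset.mul_sum]

lemma amp23_mul {m : ℕ} (X Y : Matrix (Fin m × Fin m) (Fin m × Fin m) ℂ) :
    amp23 (X * Y) = amp23 X * amp23 Y := by
  ext ⟨i,j,k⟩ ⟨i',j',k'⟩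
  simp [amp23, Matrix.mul_apply, Fintype.sum_prod_type, mul_ite, ite_mul, Finset.mul_sum]

lemma amp12_one {m : ℕ} : amp12 (1 : Matrix (Fin m × Fin m) (Fin m × Fin m) ℂ) = 1 := by
  ext ⟨i,j,k⟩ ⟨i',j',k'⟩
  simp [amp12, Matrix.one_apply, Prod.ext_iff, and_assoc]
  aesop

lemma amp23_one {m : ℕ} : amp23 (1 : Matrix (Fin m × Fin m) (Fin m × Fin m) ℂ) = 1 := by
  ext ⟨i,j,k⟩ ⟨i',j',k'⟩
  simp [amp23, Matrix.one_apply, Prod.ext_iff, and_assoc]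
  aesop

lemma amp12_sub {m : ℕ} (X Y : Matrix (Fin m × Fin m) (Fin m × Fin m) ℂ) :
    amp12 (X - Y) = amp12 X - amp12 Y := by
  ext ⟨i,j,k⟩ ⟨i',j',k'⟩
  simp only [amp12, Matrix.of_apply, Matrix.sub_apply]
  split <;> simp

lemma amp23_sub {m : ℕ} (X Y : Matrix (Fin m × Fin m) (Fin m × Fin m) ℂ) :
    amp23 (X - Y) = amp23 X - amp23 Y := by
  ext ⟨i,j,k⟩ ⟨i',j',k'⟩
  simp only [amp23, Matrix.of_apply, Matrix.sub_apply]
  split <;> simp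

lemma amp12_smul {m : ℕ} (c : ℂ) (X : Matrix (Fin m × Fin m) (Fin m × Fin m) ℂ) :
    amp12 (c • X) = c • amp12 X := by
  ext ⟨i,j,k⟩ ⟨i',j',k'⟩
  simp [amp12, mul_assoc]

lemma amp23_smul {m : ℕ} (c : ℂ) (X : Matrix (Fin m × Fin m) (Fin m × Fin m) ℂ) :
    amp23 (c • X) = c • amp23 X := by
  ext ⟨i,j,k⟩ ⟨i',j',k'⟩
  simp [amp23, mul_left_comm]

lemma key {n : Type*} [Fintype n] [DecidableEq n] (A B : Matrix n n ℂ)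
    (hA : A * A = 1) (hB : B * B = 1) (hbr : A * B * A = B * A * B)
    (α β γ : ℂ) (hs : β * (α + γ) = α * γ) :
    (A - α • 1) * (B - β • 1) * (A - γ • 1)
      = (B - γ • 1) * (A - β • 1) * (B - α • 1) := by
  have hbr' : A * (B * A) = B * (A * B) := by
    rw [← mul_assoc, ← mul_assoc, hbr]
  have hA' : A * (A * B) = B := by rw [← mul_assoc, hA, one_mul]
  have hB' : B * (B * A) = A := by rw [← mul_assoc, hB, one_mul]
  simp only [sub_mul, mul_sub, smul_mul_assoc, Matrix.mul_smul, smul_smul,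
    Matrix.one_mul, Matrix.mul_one, mul_one, one_mul, mul_assoc, hA, hB, hbr', hA', hB']
  match_scalars <;> first
    | ring1
    | linear_combination hs
    | linear_combination -hs
    | linear_combination (2:ℂ)*hs
    | linear_combination (-2:ℂ)*hs

/-- If `R` is an involutive symmetry and `a ≠ 0`, then the rational current `R`-matrix
`R(u,v) = R − (a/(u−v))·I` satisfies the quantum Yang–Baxter equation with parameters:
`R₁₂(u,v) R₂₃(u,w) R₁₂(v,w) = R₂₃(v,w) R₁₂(u,w) R₂₃(u,v)` for pairwise distinct `u, v, w`. -/
theorem rational_current_YangBaxter (m : ℕ) (hm : 1 ≤ m)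
    (R : Matrix (Fin m × Fin m) (Fin m × Fin m) ℂ)
    (hbraid : amp12 R * amp23 R * amp12 R = amp23 R * amp12 R * amp23 R)
    (hinv : R * R = 1)
    (a : ℂ) (ha : a ≠ 0)
    (u v w : ℂ) (huv : u ≠ v) (huw : u ≠ w) (hvw : v ≠ w) :
    amp12 (R - (a / (u - v)) • 1) * amp23 (R - (a / (u - w)) • 1) *
        amp12 (R - (a / (v - w)) • 1) =
      amp23 (R - (a / (v - w)) • 1) * amp12 (R - (a / (u - w)) • 1) *
        amp23 (R - (a / (u - v)) • 1) := by
  have h12 : ∀ s : ℂ, amp12 (R - s • 1) = amp12 R - s • (1 : Matrix _ _ ℂ) := by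
    intro s
    rw [amp12_sub, amp12_smul, amp12_one]
  have h23 : ∀ s : ℂ, amp23 (R - s • 1) = amp23 R - s • (1 : Matrix _ _ ℂ) := by
    intro s
    rw [amp23_sub, amp23_smul, amp23_one]
  simp only [h12, h23]
  have hA : amp12 R * amp12 R = 1 := by rw [← amp12_mul, hinv, amp12_one]
  have hB : amp23 R * amp23 R = 1 := by rw [← amp23_mul, hinv, amp23_one]
  have huv' : u - v ≠ 0 := sub_ne_zero.mpr huv
  have huw' : u - w ≠ 0 := sub_ne_zero.mpr huw
  have hvw' : v - w ≠ 0 := sub_ne_zero.mpr hvw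
  exact key _ _ hA hB hbraid (a/(u-v)) (a/(u-w)) (a/(v-w)) (by field_simp; ring)
end

section
/- Let R be an involutive symmetry on V⊗V which is not a scalar multiple of the identity. Then for any scalars g₁, g₂, g₃ ∈ ℂ, the identity (R₁₂ + g₁I)(R₂₃ + g₂I)(R₁₂ + g₃I) = (R₂₃ + g₃I)(R₁₂ + g₂I)(R₂₃ + g₁I) holds on V⊗V⊗V if and only if g₁g₃ = g₂(g₁ + g₃). (This is the scalar functional equation to which the quantum Yang–Baxter equation for R(u,v) = R + g(u,v)I reduces in the involutive case.) -/
lemma amp12_sq {m : ℕ} (R : Matrix (Fin m × Fin m) (Fin m × Fin m) ℂ)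
    (hinv : R * R = 1) : amp12 R * amp12 R = 1 := by
  ext p q
  have h := congrFun (congrFun hinv (p.1, p.2.1)) (q.1, q.2.1)
  simp only [Matrix.mul_apply, amp12, Matrix.of_apply, Fintype.sum_prod_type,
    Matrix.one_apply, Prod.mk.injEq] at *
  simp only [mul_ite, mul_one, mul_zero, ite_mul, zero_mul, Finset.sum_ite_eq,
    Finset.mem_univ, if_true, Prod.ext_iff]
  by_cases h3 : p.2.2 = q.2.2 <;> simp [h3, ← h, Finset.mul_sum, mul_comm]

lemma amp23_sq {m : ℕ} (R : Matrix (Fin m × Fin m) (Fin m × Fin m) ℂ)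
    (hinv : R * R = 1) : amp23 R * amp23 R = 1 := by
  ext p q
  have h := congrFun (congrFun hinv p.2) q.2
  simp only [Matrix.mul_apply, amp23, Matrix.of_apply, Fintype.sum_prod_type,
    Matrix.one_apply, Prod.mk.injEq] at *
  simp only [ite_mul, one_mul, zero_mul, Finset.sum_ite_eq, Finset.mem_univ, if_true,
    Prod.ext_iff]
  by_cases h1 : p.1 = q.1 <;> simp [h1, ← h, ← Prod.ext_iff]

lemma amp_ne {m : ℕ} (hm : 1 ≤ m) (R : Matrix (Fin m × Fin m) (Fin m × Fin m) ℂ)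
    (hns : ∀ c : ℂ, R ≠ c • 1) : amp12 R ≠ amp23 R := by
  intro h
  set z : Fin m := ⟨0, hm⟩
  have h' : ∀ p q : Fin m × Fin m × Fin m,
      R (p.1, p.2.1) (q.1, q.2.1) * (if p.2.2 = q.2.2 then 1 else 0)
        = (if p.1 = q.1 then 1 else 0) * R p.2 q.2 := by
    intro p q
    exact congrFun (congrFun h p) q
  set T : Fin m → Fin m → ℂ := fun a c => R (z, a) (z, c) with hT
  have hRT : ∀ a b c d, R (a, b) (c, d) = T a c * (if b = d then 1 else 0) := by
    intro a b c d
    have := h' (z, a, b) (z, c, d)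
    simpa using this.symm
  have hrel : ∀ a b c d : Fin m,
      T a c * (if b = d then 1 else 0) = (if a = c then 1 else 0) * T b d := by
    intro a b c d
    have := h' (a, b, z) (c, d, z)
    simp [hRT a b c d, hRT b z d z] at this ⊢
    simpa using this
  apply hns (T z z)
  ext ⟨a, b⟩ ⟨c, d⟩
  have h1 := hrel a z c z
  simp at h1
  rw [hRT, h1]
  by_cases hac : a = c <;> by_cases hbd : b = d <;>
    simp [hac, hbd, Matrix.one_apply, Prod.ext_iff]

/-- For an involutive symmetry `R` which is not a scalar multiple of the identity, the
identity `(R₁₂ + g₁I)(R₂₃ + g₂I)(R₁₂ + g₃I) = (R₂₃ + g₃I)(R₁₂ + g₂I)(R₂₃ + g₁I)` holds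
iff `g₁g₃ = g₂(g₁ + g₃)`. -/
theorem involutive_scalar_functional_equation (m : ℕ) (hm : 1 ≤ m)
    (R : Matrix (Fin m × Fin m) (Fin m × Fin m) ℂ)
    (hbraid : amp12 R * amp23 R * amp12 R = amp23 R * amp12 R * amp23 R)
    (hinv : R * R = 1)
    (hns : ∀ c : ℂ, R ≠ c • 1)
    (g₁ g₂ g₃ : ℂ) :
    (amp12 R + g₁ • 1) * (amp23 R + g₂ • 1) * (amp12 R + g₃ • 1) =
        (amp23 R + g₃ • 1) * (amp12 R + g₂ • 1) * (amp23 R + g₁ • 1) ↔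
      g₁ * g₃ = g₂ * (g₁ + g₃) := by
  set A := amp12 R
  set B := amp23 R
  have hA : A * A = 1 := amp12_sq R hinv
  have hB : B * B = 1 := amp23_sq R hinv
  have key : (A + g₁ • 1) * (B + g₂ • 1) * (A + g₃ • 1)
      - (B + g₃ • 1) * (A + g₂ • 1) * (B + g₁ • 1)
      = (g₂ * (g₁ + g₃) - g₁ * g₃) • (A - B) := by
    simp only [mul_add, add_mul, smul_mul_assoc, Matrix.mul_smul, Matrix.smul_mul,
      mul_one, one_mul, smul_smul, hA, hB]
    rw [show A * B * A = B * A * B from hbraid]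
    rw [smul_sub]
    module
  constructor
  · intro h
    have h0 : (g₂ * (g₁ + g₃) - g₁ * g₃) • (A - B) = 0 := by
      rw [← key, h, sub_self]
    rcases smul_eq_zero.mp h0 with hc | hAB
    · exact (sub_eq_zero.mp hc).symm
    · exact absurd (sub_eq_zero.mp hAB) (amp_ne hm R hns)
  · intro h
    have hc : (g₂ * (g₁ + g₃) - g₁ * g₃) = 0 := by rw [← h]; ring
    rw [← sub_eq_zero, key, hc, zero_smul]
end

section
/- Let f : ℂ → ℂ be meromorphic on all of ℂ and not constant (there exist points x, y at which f is analytic with f(x) ≠ f(y)). Suppose that f(x)·f(y) = f(x+y)·(f(x) + f(y)) for all x, y ∈ ℂ such that f is analytic at x, at y, and at x+y. Then there exists a nonzero a ∈ ℂ such that f(z) = a/z for every nonzero z at which f is analytic. (This is the functional equation determining the rational solutions g(u,v) = a/(u−v) of the Yang-Baxterization of an involutive symmetry.) -/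
/-!
Where `f` is analytic and nonzero, `g = 1/f` turns the equation into additivity,
`g (x + y) = g x + g y`. The set `V` of such points has closed discrete, hence countable,
complement, so `V` is connected and any finitely many translates of `V` meet.
Differentiating the additivity in `x` shows that `g'` is translation invariant on `V`, hence
constant; so `g` is affine on `V`, additivity kills the constant term, and `f = a / z` on `V`,
hence by continuity at every analytic point.
-/

open Filter Topology Set

theorem countable_compl_of_mem_codiscrete {X : Type*} [TopologicalSpace X]
    [HereditarilyLindelofSpace X] {s : Set X} (hs : s ∈ codiscrete X) : sᶜ.Countable :=
  (HereditarilyLindelofSpace.isLindelof _).countable_of_isDiscrete (mem_codiscrete'.1 hs).2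

theorem Complex.isConnected_of_countable_compl {s : Set ℂ} (hs : sᶜ.Countable) :
    IsConnected s := by
  simpa using hs.isConnected_compl_of_one_lt_rank (by simp [Complex.rank_real_complex])

theorem exists_add_mem_add_mem_of_countable_compl {V : Set ℂ} (hV : Vᶜ.Countable) (a b : ℂ) :
    ∃ w ∈ V, w + a ∈ V ∧ w + b ∈ V := by
  have h : (V ∩ (· + a) ⁻¹' V ∩ (· + b) ⁻¹' V)ᶜ.Countable := by
    simp only [compl_inter, ← preimage_compl]
    exact (hV.union (hV.preimage (add_left_injective a))).union
      (hV.preimage (add_left_injective b))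
  obtain ⟨w, ⟨hw, hwa⟩, hwb⟩ := (Complex.isConnected_of_countable_compl h).nonempty
  exact ⟨w, hw, hwa, hwb⟩

theorem deriv_add_eq_of_additiveOn {𝕜 E : Type*} [NontriviallyNormedField 𝕜]
    [NormedAddCommGroup E] [NormedSpace 𝕜 E] {g : 𝕜 → E} {V : Set 𝕜} (hV : IsOpen V)
    (hadd : ∀ x ∈ V, ∀ y ∈ V, x + y ∈ V → g (x + y) = g x + g y)
    {z t : 𝕜} (hz : z ∈ V) (ht : t ∈ V) (hzt : z + t ∈ V) :
    deriv g (z + t) = deriv g z := by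
  have hloc : (fun w => g (w + t)) =ᶠ[𝓝 z] fun w => g w + g t := by
    filter_upwards [hV.mem_nhds hz,
      (continuous_add_const t).continuousAt.preimage_mem_nhds (hV.mem_nhds hzt)] with w hw hwt
    exact hadd w hw t ht hwt
  simpa only [deriv_comp_add_const, deriv_add_const] using hloc.deriv_eq

section AdditiveOn

variable {E : Type*} [NormedAddCommGroup E] [NormedSpace ℂ E] {g : ℂ → E} {V : Set ℂ}

theorem deriv_eq_of_additiveOn (hV : IsOpen V) (hVc : Vᶜ.Countable)
    (hadd : ∀ x ∈ V, ∀ y ∈ V, x + y ∈ V → g (x + y) = g x + g y)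
    {z z' : ℂ} (hz : z ∈ V) (hz' : z' ∈ V) : deriv g z = deriv g z' := by
  obtain ⟨w, hw, hwz, hwz'⟩ := exists_add_mem_add_mem_of_countable_compl hVc z z'
  have hderiv : ∀ u ∈ V, w + u ∈ V → deriv g u = deriv g w := fun u hu hwu => by
    rw [← deriv_add_eq_of_additiveOn hV hadd hu hw (by rwa [add_comm]), add_comm,
      deriv_add_eq_of_additiveOn hV hadd hw hu hwu]
  exact (hderiv z hz hwz).trans (hderiv z' hz' hwz').symm

theorem exists_eq_smul_of_additiveOn (hV : IsOpen V) (hVc : Vᶜ.Countable)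
    (hg : DifferentiableOn ℂ g V)
    (hadd : ∀ x ∈ V, ∀ y ∈ V, x + y ∈ V → g (x + y) = g x + g y) :
    ∃ c : E, ∀ z ∈ V, g z = z • c := by
  have hVconn := Complex.isConnected_of_countable_compl hVc
  obtain ⟨w₀, hw₀⟩ := hVconn.nonempty
  set c := deriv g w₀
  have hlin : ∀ z, HasDerivAt (fun z : ℂ => z • c) c z := fun z => by
    simpa using (hasDerivAt_id z).smul_const c
  obtain ⟨a, ha⟩ := hV.exists_eq_add_of_deriv_eq hVconn.isPreconnected hg
    (fun z _ => (hlin z).differentiableAt.differentiableWithinAt)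
    (fun z hz => (deriv_eq_of_additiveOn hV hVc hadd hz hw₀).trans (hlin z).deriv.symm)
  obtain ⟨x, hx, hxw₀, -⟩ := exists_add_mem_add_mem_of_countable_compl hVc w₀ w₀
  have ha0 : a = 0 := by
    have h := hadd x hx w₀ hw₀ hxw₀
    simp only [ha hx, ha hw₀, ha hxw₀, add_smul] at h
    linear_combination (norm := module) -h
  exact ⟨c, fun z hz => by simpa [ha0] using ha hz⟩

end AdditiveOn

theorem Meromorphic.setOf_analyticAt_and_ne_zero_mem_codiscrete {𝕜 E : Type*} [RCLike 𝕜]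
    [NormedAddCommGroup E] [NormedSpace 𝕜 E] [CompleteSpace E] {f : 𝕜 → E}
    (hf : Meromorphic f) {x₀ : 𝕜} (hx₀ : AnalyticAt 𝕜 f x₀) (hfx₀ : f x₀ ≠ 0) :
    {z | AnalyticAt 𝕜 f z ∧ f z ≠ 0} ∈ codiscrete 𝕜 := by
  have hord : ∀ z, meromorphicOrderAt f z ≠ ⊤ :=
    hf.exists_meromorphicOrderAt_ne_top_iff_forall.1
      ⟨x₀, by simp [hx₀.meromorphicOrderAt_eq, hx₀.analyticOrderAt_eq_zero.2 hfx₀]⟩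
  exact inter_mem hf.meromorphicOn.analyticAt_mem_codiscreteWithin
    (hf.meromorphicOn.eventually_codiscreteWithin_apply_ne_zero fun z _ => hord z)

theorem inv_eq_inv_add_inv_of_mul_eq_mul_add {K : Type*} [Field K] {a b c : K}
    (ha : a ≠ 0) (hb : b ≠ 0) (h : a * b = c * (a + b)) : c⁻¹ = a⁻¹ + b⁻¹ := by
  have hc : c ≠ 0 := by
    rintro rfl
    simp [ha, hb] at h
  field_simp
  linear_combination h

/-- If `f` is meromorphic on ℂ, non-constant, and satisfies the functional equation
`f(x)·f(y) = f(x+y)·(f(x) + f(y))` (at points of analyticity), then `f(z) = a/z`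
for some nonzero constant `a`. -/
theorem rational_solution_of_functional_equation
    (f : ℂ → ℂ) (hf : MeromorphicOn f Set.univ)
    (hnc : ∃ x y : ℂ, AnalyticAt ℂ f x ∧ AnalyticAt ℂ f y ∧ f x ≠ f y)
    (heq : ∀ x y : ℂ, AnalyticAt ℂ f x → AnalyticAt ℂ f y → AnalyticAt ℂ f (x + y) →
      f x * f y = f (x + y) * (f x + f y)) :
    ∃ a : ℂ, a ≠ 0 ∧ ∀ z : ℂ, z ≠ 0 → AnalyticAt ℂ f z → f z = a / z := by
  obtain ⟨x₀, y₀, hx₀, hy₀, hne⟩ := hnc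
  obtain ⟨z₀, hz₀, hfz₀⟩ : ∃ z₀, AnalyticAt ℂ f z₀ ∧ f z₀ ≠ 0 := by
    by_cases h : f x₀ = 0
    · exact ⟨y₀, hy₀, fun h' => hne (h.trans h'.symm)⟩
    · exact ⟨x₀, hx₀, h⟩
  set V := {z | AnalyticAt ℂ f z ∧ f z ≠ 0}
  have hV : V ∈ codiscrete ℂ :=
    Meromorphic.setOf_analyticAt_and_ne_zero_mem_codiscrete (meromorphicOn_univ.1 hf) hz₀ hfz₀
  obtain ⟨c, hc⟩ : ∃ c : ℂ, ∀ z ∈ V, (f z)⁻¹ = z • c :=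
    exists_eq_smul_of_additiveOn (mem_codiscrete'.1 hV).1 (countable_compl_of_mem_codiscrete hV)
      (fun z hz => (hz.1.inv hz.2).differentiableAt.differentiableWithinAt)
      fun x hx y hy hxy =>
        inv_eq_inv_add_inv_of_mul_eq_mul_add hx.2 hy.2 (heq x y hx.1 hy.1 hxy.1)
  have hc0 : c ≠ 0 := by
    rintro rfl
    exact inv_ne_zero hfz₀ (by simpa using hc z₀ ⟨hz₀, hfz₀⟩)
  have hfV : ∀ z ∈ V, f z = c⁻¹ / z := fun z hz => by
    rw [← inv_inv (f z), hc z hz, smul_eq_mul, mul_inv, div_eq_mul_inv, mul_comm]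
  refine ⟨c⁻¹, inv_ne_zero hc0, fun z hz hfz => ?_⟩
  have hev : f =ᶠ[𝓝[≠] z] fun w => c⁻¹ / w :=
    mem_of_superset (by simpa using disjoint_principal_right.1 (mem_codiscrete.1 hV z)) hfV
  exact ((hfz.continuousAt.eventuallyEq_nhds_iff_eventuallyEq_nhdsNE
    (continuousAt_const.div continuousAt_id hz)).1 hev).eq_of_nhds
end

section
/- Let c ∈ ℂ be nonzero and let f : ℂ → ℂ be meromorphic on all of ℂ and not constant (there exist points x, y at which f is analytic with f(x) ≠ f(y)). Suppose that f(x)·f(y) = f(x+y)·(f(x) + f(y) + c) for all x, y ∈ ℂ such that f is analytic at x, at y, and at x+y. Then there exists a nonzero λ ∈ ℂ such that f(z) = c/(exp(λz) − 1) for every z at which f is analytic and exp(λz) ≠ 1. (Writing b = e^λ, this is the functional equation determining the trigonometric solutions g(u,v) = (q − q⁻¹)/(b^{u−v} − 1), with c = q − q⁻¹, of the Yang-Baxterization of a Hecke symmetry.) -/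
/-!
The analytic locus `U` of `f` is open with countable complement, hence connected. By the identity
theorem `f z ≠ v` also holds off a countable set for each fixed `v`, so points satisfying finitely
many such conditions, also after translation, always exist. Feeding them into the functional
equation shows that `f` and `f + c` do not vanish on `U` and that `g = (f + c) / f` satisfies
`g (x + y) = g x * g y`. Hence the logarithmic derivative of `g` is a constant `λ` on `U`, so
`g = K exp (λ z)` on the connected set `U`, with `K = 1` by multiplicativity; solving
`(f + c) / f = exp (λ z)` for `f` gives the claim.
-/

open Filter Set Topology

theorem Filter.tendsto_cocountable_of_injective {α β : Type*} {f : α → β}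
    (hf : Function.Injective f) : Tendsto f cocountable cocountable := fun s hs =>
  mem_cocountable.2 <| by simpa only [preimage_compl] using (mem_cocountable.1 hs).preimage hf

theorem Filter.cocountable_le_codiscrete (X : Type*) [TopologicalSpace X]
    [HereditarilyLindelofSpace X] : cocountable ≤ codiscrete X := fun s hs =>
  mem_cocountable.2 <| by
    have := (HereditarilyLindelofSpace.isLindelof _).countable_of_isDiscrete
      (isDiscrete_of_codiscreteWithin (s := sᶜ) (by simpa [codiscrete] using hs))
    rwa [inter_univ] at this

instance Filter.cocountable_neBot {α : Type*} [Uncountable α] :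
    (cocountable : Filter α).NeBot :=
  ⟨fun h => not_countable_univ (by simpa using mem_cocountable.1 (h ▸ mem_bot : ∅ ∈ cocountable))⟩

instance Complex.uncountable : Uncountable ℂ := Complex.ofReal_injective.uncountable

theorem isPreconnected_of_mem_cocountable {U : Set ℂ} (hU : U ∈ cocountable) :
    IsPreconnected U := by
  simpa using ((mem_cocountable.1 hU).isConnected_compl_of_one_lt_rank
    (by simp [Complex.rank_real_complex])).isPreconnected

namespace MeromorphicOn

variable {E : Type*} [NormedAddCommGroup E] [NormedSpace ℂ E] {f : ℂ → E}

theorem eventually_cocountable_analyticAt [CompleteSpace E] (hf : MeromorphicOn f univ) :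
    ∀ᶠ z in cocountable, AnalyticAt ℂ f z :=
  cocountable_le_codiscrete ℂ hf.analyticAt_mem_codiscreteWithin

theorem eventually_cocountable_ne (hf : MeromorphicOn f univ) {x y : ℂ} (hx : AnalyticAt ℂ f x)
    (hy : AnalyticAt ℂ f y) (hxy : f x ≠ f y) (v : E) : ∀ᶠ z in cocountable, f z ≠ v := by
  obtain ⟨w, hw, hwv⟩ : ∃ w, AnalyticAt ℂ f w ∧ f w ≠ v := by
    by_cases hxv : f x = v
    · exact ⟨y, hy, hxv ▸ hxy.symm⟩
    · exact ⟨x, hx, hxv⟩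
  have hfv : MeromorphicOn (f · - v) univ := hf.sub (MeromorphicOn.const v)
  have hw_ord : meromorphicOrderAt (f · - v) w ≠ ⊤ :=
    (meromorphicOrderAt_ne_top_iff_eventually_ne_zero (hfv w trivial)).2 <|
      eventually_nhdsWithin_of_eventually_nhds <|
        (hw.continuousAt.eventually_ne hwv).mono fun z hz => sub_ne_zero.2 hz
  have hord := (hfv.exists_meromorphicOrderAt_ne_top_iff_forall_mem isConnected_univ).1
    ⟨w, trivial, hw_ord⟩
  filter_upwards [cocountable_le_codiscrete ℂ (hfv.eventually_codiscreteWithin_apply_ne_zero hord)]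
    with z hz using sub_ne_zero.1 hz

end MeromorphicOn

theorem logDeriv_cexp_const_mul (l z : ℂ) : logDeriv (fun w => Complex.exp (l * w)) z = l := by
  simpa [Function.comp_def] using logDeriv_comp (f := Complex.exp) (g := (l * ·)) (x := z)
    Complex.differentiableAt_exp (differentiableAt_id.const_mul l)

section Multiplicative

variable {g : ℂ → ℂ} {U : Set ℂ}

theorem logDeriv_add_eq_of_map_add (hUo : IsOpen U) (hg0 : ∀ z ∈ U, g z ≠ 0)
    (hmul : ∀ x ∈ U, ∀ y ∈ U, x + y ∈ U → g (x + y) = g x * g y) {x y : ℂ} (hx : x ∈ U)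
    (hy : y ∈ U) (hxy : x + y ∈ U) : logDeriv g (x + y) = logDeriv g y := by
  have hev : (fun w => g (x + w)) =ᶠ[𝓝 y] fun w => g x * g w := by
    filter_upwards [hUo.mem_nhds hy, (hUo.preimage (continuous_const_add x)).mem_nhds hxy]
      with w hw hxw using hmul x hx w hw hxw
  have hderiv : deriv g (x + y) = g x * deriv g y := by
    rw [← deriv_comp_const_add, hev.deriv_eq, deriv_const_mul_field]
  rw [logDeriv_apply, logDeriv_apply, hderiv, hmul x hx y hy hxy,
    mul_div_mul_left _ _ (hg0 x hx)]

theorem exists_eqOn_cexp_of_map_add (hUo : IsOpen U) (hU : U ∈ cocountable)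
    (hg : DifferentiableOn ℂ g U) (hg0 : ∀ z ∈ U, g z ≠ 0)
    (hmul : ∀ x ∈ U, ∀ y ∈ U, x + y ∈ U → g (x + y) = g x * g y) :
    ∃ l, EqOn g (fun z => Complex.exp (l * z)) U := by
  have hU' : ∀ᶠ z in cocountable, z ∈ U := hU
  have hsub (a : ℂ) : ∀ᶠ y in cocountable, a - y ∈ U :=
    (tendsto_cocountable_of_injective (sub_right_injective (b := a))).eventually hU
  obtain ⟨p, hp⟩ := hU'.exists
  set l := logDeriv g p
  have hconst : EqOn (logDeriv g) (fun _ => l) U := by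
    intro q hq
    obtain ⟨y, hy, hpy, hqy⟩ := (hU'.and ((hsub p).and (hsub q))).exists
    have hp' := logDeriv_add_eq_of_map_add hUo hg0 hmul hpy hy (by rwa [sub_add_cancel])
    have hq' := logDeriv_add_eq_of_map_add hUo hg0 hmul hqy hy (by rwa [sub_add_cancel])
    rw [sub_add_cancel] at hp' hq'
    exact hq'.trans hp'.symm
  obtain ⟨K, hK0, hK⟩ := (logDeriv_eqOn_iff hg (by fun_prop) hUo
    (isPreconnected_of_mem_cocountable hU) (fun _ _ => Complex.exp_ne_zero _) hg0).1
    (hconst.trans fun z _ => (logDeriv_cexp_const_mul l z).symm)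
  obtain ⟨x, hx, hpx⟩ := (hU'.and
    ((tendsto_cocountable_of_injective (add_right_injective p)).eventually hU)).exists
  have hK1 : K = 1 := by
    have h := hmul p hp x hx hpx
    simp only [hK hp, hK hx, hK hpx, Pi.smul_apply, smul_eq_mul, mul_add, Complex.exp_add] at h
    have hE : K * (Complex.exp (l * p) * Complex.exp (l * x)) ≠ 0 :=
      mul_ne_zero hK0 (mul_ne_zero (Complex.exp_ne_zero _) (Complex.exp_ne_zero _))
    exact mul_left_cancel₀ hE (by linear_combination -h)
  exact ⟨l, fun z hz => by simpa [hK1] using hK hz⟩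

end Multiplicative

def SolvesFunctionalEquation (c : ℂ) (f : ℂ → ℂ) : Prop :=
  ∀ x y : ℂ, AnalyticAt ℂ f x → AnalyticAt ℂ f y → AnalyticAt ℂ f (x + y) →
    f x * f y = f (x + y) * (f x + f y + c)

namespace SolvesFunctionalEquation

variable {f : ℂ → ℂ} {c : ℂ}

theorem apply_ne_zero (heq : SolvesFunctionalEquation c f)
    (hU : ∀ᶠ z in cocountable, AnalyticAt ℂ f z) (hne : ∀ v, ∀ᶠ z in cocountable, f z ≠ v)
    {a : ℂ} (ha : AnalyticAt ℂ f a) : f a ≠ 0 := by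
  intro ha0
  obtain ⟨y, ⟨hy, hyc⟩, hay, hay0⟩ := ((hU.and (hne (-c))).and
    ((tendsto_cocountable_of_injective (add_right_injective a)).eventually
      (hU.and (hne 0)))).exists
  have h := heq a y ha hy hay
  rw [ha0, zero_mul, zero_add] at h
  rcases mul_eq_zero.1 h.symm with h | h
  · exact hay0 h
  · exact hyc (eq_neg_of_add_eq_zero_left h)

theorem apply_add_ne_zero (heq : SolvesFunctionalEquation c f)
    (hU : ∀ᶠ z in cocountable, AnalyticAt ℂ f z) (hne : ∀ v, ∀ᶠ z in cocountable, f z ≠ v)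
    (h0 : ∀ z, AnalyticAt ℂ f z → f z ≠ 0) {a : ℂ} (ha : AnalyticAt ℂ f a) : f a + c ≠ 0 := by
  intro hac
  obtain ⟨y, hy, hay, hayc⟩ := (hU.and
    ((tendsto_cocountable_of_injective (add_right_injective a)).eventually
      (hU.and (hne (-c))))).exists
  have h : (f (a + y) + c) * f y = 0 := by
    linear_combination -(heq a y ha hy hay) + (f y - f (a + y)) * hac
  rcases mul_eq_zero.1 h with h | h
  · exact hayc (eq_neg_of_add_eq_zero_left h)
  · exact h0 y hy h

theorem add_div_self_map_add (heq : SolvesFunctionalEquation c f)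
    (h0 : ∀ z, AnalyticAt ℂ f z → f z ≠ 0) {x y : ℂ} (hx : AnalyticAt ℂ f x)
    (hy : AnalyticAt ℂ f y) (hxy : AnalyticAt ℂ f (x + y)) :
    (f (x + y) + c) / f (x + y) = (f x + c) / f x * ((f y + c) / f y) := by
  rw [div_mul_div_comm, div_eq_div_iff (h0 _ hxy) (mul_ne_zero (h0 x hx) (h0 y hy))]
  linear_combination c * heq x y hx hy hxy

end SolvesFunctionalEquation

/-- If `c ≠ 0` and `f` is meromorphic on ℂ, non-constant, and satisfies the functional
equation `f(x)·f(y) = f(x+y)·(f(x) + f(y) + c)` (at points of analyticity), then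
`f(z) = c/(exp(λz) − 1)` for some nonzero constant `λ`. -/
theorem trigonometric_solution_of_functional_equation
    (c : ℂ) (hc : c ≠ 0)
    (f : ℂ → ℂ) (hf : MeromorphicOn f Set.univ)
    (hnc : ∃ x y : ℂ, AnalyticAt ℂ f x ∧ AnalyticAt ℂ f y ∧ f x ≠ f y)
    (heq : ∀ x y : ℂ, AnalyticAt ℂ f x → AnalyticAt ℂ f y → AnalyticAt ℂ f (x + y) →
      f x * f y = f (x + y) * (f x + f y + c)) :
    ∃ l : ℂ, l ≠ 0 ∧ ∀ z : ℂ, AnalyticAt ℂ f z → Complex.exp (l * z) ≠ 1 →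
      f z = c / (Complex.exp (l * z) - 1) := by
  obtain ⟨x₀, y₀, hx₀, hy₀, hxy⟩ := hnc
  have hlaw : SolvesFunctionalEquation c f := heq
  have hU := hf.eventually_cocountable_analyticAt
  have hne := hf.eventually_cocountable_ne hx₀ hy₀ hxy
  have h0 : ∀ z, AnalyticAt ℂ f z → f z ≠ 0 := fun _ => hlaw.apply_ne_zero hU hne
  have hc0 : ∀ z, AnalyticAt ℂ f z → f z + c ≠ 0 := fun _ => hlaw.apply_add_ne_zero hU hne h0
  obtain ⟨l, hl⟩ := exists_eqOn_cexp_of_map_add (g := fun z => (f z + c) / f z)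
    (isOpen_analyticAt ℂ f) hU
    (fun z hz => ((hz.add analyticAt_const).div hz (h0 z hz)).differentiableWithinAt)
    (fun z hz => div_ne_zero (hc0 z hz) (h0 z hz))
    (fun x hx y hy hxy => hlaw.add_div_self_map_add h0 hx hy hxy)
  refine ⟨l, ?_, fun z hz hz1 => ?_⟩
  · rintro rfl
    have h : (f x₀ + c) / f x₀ = Complex.exp (0 * x₀) := hl hx₀
    rw [zero_mul, Complex.exp_zero, div_eq_one_iff_eq (h0 x₀ hx₀)] at h
    exact hc (by linear_combination h)
  · have h : (f z + c) / f z = Complex.exp (l * z) := hl hz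
    rw [div_eq_iff (h0 z hz)] at h
    rw [eq_div_iff (sub_ne_zero.2 hz1)]
    linear_combination -h
end

section
/- Let R be an involutive symmetry on V⊗V, a ∈ ℂ nonzero, A an associative unital ℂ-algebra, and M ∈ Mat_m(A); write M₁ := M⊗I_m ∈ Mat_{m²}(A) and, for nonzero u, L(u) := I + u⁻¹M with L₁(u) := L(u)⊗I_m. Then M satisfies the modified reflection equation R M₁ R M₁ − M₁ R M₁ R = a(R M₁ − M₁ R) if and only if for all distinct nonzero u, v ∈ ℂ the braided Yangian defining relation holds: (R − (a/(u−v))I) L₁(u) R L₁(v) = L₁(v) R L₁(u) (R − (a/(u−v))I). (This is the evaluation map L(u) ↦ I + M/u of the braided Yangian associated with an involutive symmetry, whose target is the modified reflection equation algebra.) -/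
/-- A complex `m²×m²` matrix regarded as a matrix over an algebra `A` via `algebraMap ℂ A`. -/
def matlift {m : ℕ} {A : Type*} [Ring A] [Algebra ℂ A]
    (X : Matrix (Fin m × Fin m) (Fin m × Fin m) ℂ) :
    Matrix (Fin m × Fin m) (Fin m × Fin m) A :=
  X.map (algebraMap ℂ A)

/-- For `M ∈ Mat_m(A)`, the Kronecker product `M₁ = M ⊗ I_m ∈ Mat_{m²}(A)`. -/
def amp1 {m : ℕ} {A : Type*} [Ring A] (M : Matrix (Fin m) (Fin m) A) :
    Matrix (Fin m × Fin m) (Fin m × Fin m) A :=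
  Matrix.of fun p q => M p.1 q.1 * (if p.2 = q.2 then 1 else 0)

section Helpers

variable {m : ℕ} {A : Type*} [Ring A] [Algebra ℂ A]

lemma amp1_one : amp1 (1 : Matrix (Fin m) (Fin m) A) = 1 := by
  ext p q
  simp [amp1, Matrix.one_apply, Prod.ext_iff]
  split_ifs <;> simp_all

lemma amp1_add (M N : Matrix (Fin m) (Fin m) A) : amp1 (M + N) = amp1 M + amp1 N := by
  ext p q; simp [amp1, add_mul]; split_ifs <;> simp

lemma amp1_smul (c : ℂ) (M : Matrix (Fin m) (Fin m) A) : amp1 (c • M) = c • amp1 M := by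
  ext p q; simp [amp1, smul_mul_assoc]

lemma matlift_one : matlift (1 : Matrix (Fin m × Fin m) (Fin m × Fin m) ℂ)
    = (1 : Matrix (Fin m × Fin m) (Fin m × Fin m) A) := by
  ext p q; simp [matlift, Matrix.one_apply, apply_ite (algebraMap ℂ A)]

lemma matlift_mul (X Y : Matrix (Fin m × Fin m) (Fin m × Fin m) ℂ) :
    (matlift (X * Y) : Matrix _ _ A) = matlift X * matlift Y := by
  simp [matlift, Matrix.map_mul]

lemma matlift_sub (X Y : Matrix (Fin m × Fin m) (Fin m × Fin m) ℂ) :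
    (matlift (X - Y) : Matrix _ _ A) = matlift X - matlift Y := by
  simp [matlift, Matrix.map_sub]

lemma matlift_smul (c : ℂ) (X : Matrix (Fin m × Fin m) (Fin m × Fin m) ℂ) :
    (matlift (c • X) : Matrix _ _ A) = c • matlift X := by
  ext p q
  rw [matlift, matlift, Matrix.map_apply, Matrix.smul_apply, Matrix.smul_apply,
    Matrix.map_apply, smul_eq_mul, map_mul, Algebra.smul_def]

lemma key_alg {S : Type*} [Ring S] [Algebra ℂ S] (r n : S) (hr : r * r = 1)
    (a c p q : ℂ) (hc : c * (p - q) = -(a * (p * q))) :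
    (r - c • 1) * ((1 : S) + p • n) * r * (1 + q • n)
        - (1 + q • n) * r * (1 + p • n) * (r - c • 1)
      = (p * q) • (r * n * r * n - n * r * n * r - a • (r * n - n * r)) := by
  have hr2 : ∀ x : S, r * (r * x) = x := fun x => by rw [← mul_assoc, hr, one_mul]
  simp only [mul_add, add_mul, sub_mul, mul_sub, smul_mul_assoc, mul_smul_comm,
    mul_one, one_mul, smul_sub, smul_smul, mul_assoc, hr, hr2]
  match_scalars <;> first
    | ring1
    | linear_combination hc
    | linear_combination -hc

end Helpers

/-- Evaluation map of the braided Yangian (involutive case): `M` satisfies the modified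
reflection equation `R M₁ R M₁ − M₁ R M₁ R = a(R M₁ − M₁ R)` iff `L(u) = I + M/u` satisfies
the braided Yangian defining relation
`R(u,v) L₁(u) R L₁(v) = L₁(v) R L₁(u) R(u,v)`, `R(u,v) = R − (a/(u−v))I`,
for all distinct nonzero `u, v`. -/
theorem braided_Yangian_evaluation_involutive (m : ℕ) (hm : 1 ≤ m)
    (R : Matrix (Fin m × Fin m) (Fin m × Fin m) ℂ)
    (hbraid : amp12 R * amp23 R * amp12 R = amp23 R * amp12 R * amp23 R)
    (hinv : R * R = 1)
    (a : ℂ) (ha : a ≠ 0)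
    (A : Type*) [Ring A] [Algebra ℂ A]
    (M : Matrix (Fin m) (Fin m) A) :
    (matlift R * amp1 M * matlift R * amp1 M - amp1 M * matlift R * amp1 M * matlift R
        = a • (matlift R * amp1 M - amp1 M * matlift R)) ↔
      (∀ u v : ℂ, u ≠ 0 → v ≠ 0 → u ≠ v →
        matlift (R - (a / (u - v)) • 1) * amp1 (1 + u⁻¹ • M) * matlift R * amp1 (1 + v⁻¹ • M)
          = amp1 (1 + v⁻¹ • M) * matlift R * amp1 (1 + u⁻¹ • M) *
            matlift (R - (a / (u - v)) • 1)) := by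
  set r : Matrix (Fin m × Fin m) (Fin m × Fin m) A := matlift R with hrdef
  set n : Matrix (Fin m × Fin m) (Fin m × Fin m) A := amp1 M with hndef
  have hr : r * r = 1 := by
    rw [hrdef, ← matlift_mul, hinv, matlift_one]
  have hlift : ∀ u v : ℂ, (matlift (R - (a / (u - v)) • 1)
      : Matrix (Fin m × Fin m) (Fin m × Fin m) A) = r - (a / (u - v)) • 1 := by
    intro u v
    rw [matlift_sub, matlift_smul, matlift_one, hrdef]
  have hL : ∀ u : ℂ, (amp1 (1 + u⁻¹ • M)
      : Matrix (Fin m × Fin m) (Fin m × Fin m) A) = 1 + u⁻¹ • n := by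
    intro u
    rw [amp1_add, amp1_one, amp1_smul, hndef]
  constructor
  · intro h u v hu hv huv
    rw [hlift, hL, hL, ← sub_eq_zero]
    have hc : (a / (u - v)) * (u⁻¹ - v⁻¹) = -(a * (u⁻¹ * v⁻¹)) := by
      have huv' : u - v ≠ 0 := sub_ne_zero.mpr huv
      field_simp
      ring
    rw [key_alg r n hr a (a / (u - v)) u⁻¹ v⁻¹ hc, h, sub_self, smul_zero]
  · intro h
    have h21 := h 2 1 two_ne_zero one_ne_zero (by norm_num)
    rw [hlift, hL, hL, ← sub_eq_zero] at h21
    have hc : (a / (2 - 1)) * ((2 : ℂ)⁻¹ - 1⁻¹) = -(a * ((2:ℂ)⁻¹ * 1⁻¹)) := by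
      ring_nf
    rw [key_alg r n hr a (a / (2 - 1)) (2:ℂ)⁻¹ (1:ℂ)⁻¹ hc] at h21
    have hz : r * n * r * n - n * r * n * r - a • (r * n - n * r) = 0 := by
      have := smul_eq_zero.mp h21
      rcases this with hc0 | hx
      · exfalso; norm_num at hc0
      · exact hx
    rw [sub_eq_zero] at hz
    exact hz
end

section
/- Let R be a Hecke symmetry on V⊗V with parameter q, A an associative unital ℂ-algebra, and M ∈ Mat_m(A); write M₁ := M⊗I_m ∈ Mat_{m²}(A) and, for nonzero u, L(u) := I + u⁻¹M with L₁(u) := L(u)⊗I_m. Then M satisfies the reflection equation R M₁ R M₁ = M₁ R M₁ R if and only if for all distinct nonzero u, v ∈ ℂ the braided Yangian defining relation holds with the trigonometric current R-matrix: (R − (u(q−q⁻¹)/(u−v))I) L₁(u) R L₁(v) = L₁(v) R L₁(u) (R − (u(q−q⁻¹)/(u−v))I). (This is the evaluation map L(u) ↦ I + M/u of the braided Yangian associated with a Hecke symmetry, whose target is the reflection equation algebra.) -/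
section Lifts

variable {m : ℕ} {A : Type*} [Ring A]

lemma matlift_eq_mapMatrix [Algebra ℂ A] (X : Matrix (Fin m × Fin m) (Fin m × Fin m) ℂ) :
    (matlift X : Matrix _ _ A) = (Algebra.ofId ℂ A).mapMatrix X :=
  rfl

lemma amp1_eq_kronecker (M : Matrix (Fin m) (Fin m) A) :
    amp1 M = Matrix.kroneckerMap (· * ·) M 1 := by
  ext p r
  simp [amp1, Matrix.one_apply]

end Lifts

section QuadraticRelation

variable {B : Type*} [Ring B] [Algebra ℂ B]

lemma quadratic_of_mul_eq_zero {R : B} {q : ℂ}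
    (h : (q • (1 : B) - R) * (q⁻¹ • 1 + R) = 0) :
    R * R = (q - q⁻¹) • R + (q * q⁻¹) • 1 := by
  simp only [sub_mul, mul_add, smul_mul_assoc, mul_smul_comm, one_mul, mul_one] at h
  rw [← sub_eq_zero, ← neg_eq_zero, ← h]
  match_scalars <;> ring

lemma yangian_eval_sub_eq {R N : B} {lam c : ℂ} (hR : R * R = lam • R + c • 1)
    {u v : ℂ} (hu : u ≠ 0) (hv : v ≠ 0) (huv : u ≠ v) :
    (R - (u * lam / (u - v)) • 1) * (1 + u⁻¹ • N) * R * (1 + v⁻¹ • N)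
      - (1 + v⁻¹ • N) * R * (1 + u⁻¹ • N) * (R - (u * lam / (u - v)) • 1)
    = (u⁻¹ * v⁻¹) • (R * N * R * N - N * R * N * R) := by
  set a := u * lam / (u - v) with ha
  have hcoeff : a * v⁻¹ - a * u⁻¹ = v⁻¹ * lam := by
    rw [ha]
    field_simp [sub_ne_zero.mpr huv]
  have expand : (R - a • 1) * (1 + u⁻¹ • N) * R * (1 + v⁻¹ • N)
      - (1 + v⁻¹ • N) * R * (1 + u⁻¹ • N) * (R - a • 1)
    = v⁻¹ • (R * R * N - N * (R * R)) + (a * v⁻¹ - a * u⁻¹) • (N * R - R * N)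
      + (u⁻¹ * v⁻¹) • (R * N * R * N - N * R * N * R) := by
    simp only [mul_add, add_mul, sub_mul, mul_sub, smul_sub, smul_add,
      smul_mul_assoc, mul_smul_comm, mul_one, one_mul, smul_smul, mul_assoc]
    match_scalars <;> ring
  rw [expand, hR, hcoeff]
  simp only [add_mul, mul_add, smul_mul_assoc, mul_smul_comm, one_mul, mul_one]
  match_scalars <;> ring

lemma reflection_iff_yangian_eval {R N : B} {lam c : ℂ} (hR : R * R = lam • R + c • 1) :
    R * N * R * N = N * R * N * R ↔
      ∀ u v : ℂ, u ≠ 0 → v ≠ 0 → u ≠ v →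
        (R - (u * lam / (u - v)) • 1) * (1 + u⁻¹ • N) * R * (1 + v⁻¹ • N)
          = (1 + v⁻¹ • N) * R * (1 + u⁻¹ • N) * (R - (u * lam / (u - v)) • 1) := by
  constructor
  · intro hRE u v hu hv huv
    rw [← sub_eq_zero, yangian_eval_sub_eq hR hu hv huv, hRE, sub_self, smul_zero]
  · intro hY
    have h := yangian_eval_sub_eq (N := N) hR one_ne_zero two_ne_zero (by norm_num)
    rw [hY 1 2 one_ne_zero two_ne_zero (by norm_num), sub_self, eq_comm] at h
    simpa [sub_eq_zero] using h

end QuadraticRelation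

theorem braided_Yangian_evaluation_hecke_general (m : ℕ)
    (R : Matrix (Fin m × Fin m) (Fin m × Fin m) ℂ)
    (q : ℂ)
    (hHecke : (q • (1 : Matrix (Fin m × Fin m) (Fin m × Fin m) ℂ) - R) * (q⁻¹ • 1 + R) = 0)
    (A : Type*) [Ring A] [Algebra ℂ A]
    (M : Matrix (Fin m) (Fin m) A) :
    (matlift R * amp1 M * matlift R * amp1 M = amp1 M * matlift R * amp1 M * matlift R) ↔
      (∀ u v : ℂ, u ≠ 0 → v ≠ 0 → u ≠ v →
        matlift (R - (u * (q - q⁻¹) / (u - v)) • 1) * amp1 (1 + u⁻¹ • M) * matlift R *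
            amp1 (1 + v⁻¹ • M)
          = amp1 (1 + v⁻¹ • M) * matlift R * amp1 (1 + u⁻¹ • M) *
            matlift (R - (u * (q - q⁻¹) / (u - v)) • 1)) := by
  have hR := congrArg (Algebra.ofId ℂ A).mapMatrix (quadratic_of_mul_eq_zero hHecke)
  simp only [map_mul, map_add, map_smul, map_one] at hR
  simp only [matlift_eq_mapMatrix, amp1_eq_kronecker, map_sub, map_smul, map_one,
    Matrix.add_kronecker, Matrix.smul_kronecker, Matrix.one_kronecker_one]
  exact reflection_iff_yangian_eval hR

/-- Evaluation map of the braided Yangian (Hecke case): `M` satisfies the reflection equation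
`R M₁ R M₁ = M₁ R M₁ R` iff `L(u) = I + M/u` satisfies the braided Yangian defining relation
with the trigonometric current `R`-matrix `R(u,v) = R − (u(q−q⁻¹)/(u−v))I`:
`R(u,v) L₁(u) R L₁(v) = L₁(v) R L₁(u) R(u,v)` for all distinct nonzero `u, v`. -/
theorem braided_Yangian_evaluation_hecke (m : ℕ) (hm : 1 ≤ m)
    (R : Matrix (Fin m × Fin m) (Fin m × Fin m) ℂ)
    (hbraid : amp12 R * amp23 R * amp12 R = amp23 R * amp12 R * amp23 R)
    (q : ℂ) (hq : q ≠ 0) (hq2 : q ^ 2 ≠ 1)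
    (hHecke : (q • (1 : Matrix (Fin m × Fin m) (Fin m × Fin m) ℂ) - R) * (q⁻¹ • 1 + R) = 0)
    (A : Type*) [Ring A] [Algebra ℂ A]
    (M : Matrix (Fin m) (Fin m) A) :
    (matlift R * amp1 M * matlift R * amp1 M = amp1 M * matlift R * amp1 M * matlift R) ↔
      (∀ u v : ℂ, u ≠ 0 → v ≠ 0 → u ≠ v →
        matlift (R - (u * (q - q⁻¹) / (u - v)) • 1) * amp1 (1 + u⁻¹ • M) * matlift R *
            amp1 (1 + v⁻¹ • M)
          = amp1 (1 + v⁻¹ • M) * matlift R * amp1 (1 + u⁻¹ • M) *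
            matlift (R - (u * (q - q⁻¹) / (u - v)) • 1)) :=
  braided_Yangian_evaluation_hecke_general m R q hHecke A M
end

section
/- Let S(h) = I − r·h + O(h²) be a formal power series in h with coefficients in the m²×m² complex matrices, whose constant term is the identity and whose linear coefficient is −r, set R(h) := P·S(h), and let q = q(h) := exp(−h), a formal power series with complex coefficients. If (q·I − R(h))(q⁻¹·I + R(h)) = 0 as an identity of formal power series, then r₁₂ + r₂₁ = 2P, i.e. r + PrP = 2P; equivalently the symmetric part r₊ = (r₁₂ + r₂₁)/2 of the classical r-matrix of a Hecke symmetry equals P. -/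
/-- The matrix of the flip operator `P(x ⊗ y) = y ⊗ x` on `ℂ^m ⊗ ℂ^m`. -/
def flipMat (m : ℕ) : Matrix (Fin m × Fin m) (Fin m × Fin m) ℂ :=
  Matrix.of fun p q => if p.1 = q.2 ∧ p.2 = q.1 then 1 else 0

/-- The formal power series `exp(−h)·I` with `m²×m²` matrix coefficients. -/
noncomputable def expNegSeries (m : ℕ) :
    PowerSeries (Matrix (Fin m × Fin m) (Fin m × Fin m) ℂ) :=
  PowerSeries.mk fun n => (((-1 : ℂ) ^ n / n.factorial) •
    (1 : Matrix (Fin m × Fin m) (Fin m × Fin m) ℂ))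

/-- The formal power series `exp(h)·I` with `m²×m²` matrix coefficients. -/
noncomputable def expPosSeries (m : ℕ) :
    PowerSeries (Matrix (Fin m × Fin m) (Fin m × Fin m) ℂ) :=
  PowerSeries.mk fun n => (((1 : ℂ) / n.factorial) •
    (1 : Matrix (Fin m × Fin m) (Fin m × Fin m) ℂ))

/-!
Only the coefficient of `h` in the Hecke relation is needed. With `q = 1 - h + O(h²)`,
`q⁻¹ = 1 + h + O(h²)` and `R = P - P r h + O(h²)` it reads
`(1 - P)(1 - P r) + (-1 + P r)(1 + P) = P² r + P r P - 2P = 0`, and `P² = 1`.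
-/

open PowerSeries

theorem PowerSeries.coeff_one_mul_noncomm {A : Type*} [Semiring A] (φ ψ : A⟦X⟧) :
    coeff 1 (φ * ψ) = coeff 0 φ * coeff 1 ψ + coeff 1 φ * coeff 0 ψ := by
  rw [coeff_mul, show Finset.HasAntidiagonal.antidiagonal 1 = {(0, 1), (1, 0)} from rfl,
    Finset.sum_insert (by simp), Finset.sum_singleton]

theorem add_mul_mul_eq_two_smul_of_hecke {A : Type*} [Ring A] {P r : A} (hP : P * P = 1)
    {q qinv S : A⟦X⟧} (hq₀ : coeff 0 q = 1) (hq₁ : coeff 1 q = -1)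
    (hqinv₀ : coeff 0 qinv = 1) (hqinv₁ : coeff 1 qinv = 1)
    (hS₀ : coeff 0 S = 1) (hS₁ : coeff 1 S = -r)
    (hHecke : (q - C P * S) * (qinv + C P * S) = 0) :
    r + P * r * P = 2 • P := by
  have hlin := congrArg (coeff 1) hHecke
  simp only [coeff_one_mul_noncomm, map_sub, map_add, coeff_C_mul, hq₀, hq₁, hqinv₀, hqinv₁,
    hS₀, hS₁, map_zero] at hlin
  have expand : (1 - P * 1) * (1 + P * -r) + (-1 - P * -r) * (1 + P * 1) =
      P * P * r + P * r * P - 2 • P := by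
    noncomm_ring
  rw [expand, hP, one_mul, sub_eq_zero] at hlin
  exact hlin

theorem flipMat_mul_self (m : ℕ) : flipMat m * flipMat m = 1 := by
  ext p q
  simp only [flipMat, Matrix.mul_apply, Matrix.of_apply, Matrix.one_apply]
  rw [Fintype.sum_prod_type]
  simp [Prod.ext_iff, ite_and]

theorem classical_rmatrix_symmetric_part_of_hecke_general (m : ℕ)
    (r : Matrix (Fin m × Fin m) (Fin m × Fin m) ℂ)
    (S : PowerSeries (Matrix (Fin m × Fin m) (Fin m × Fin m) ℂ))
    (h0 : PowerSeries.coeff 0 S = 1)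
    (h1 : PowerSeries.coeff 1 S = -r)
    (hHecke : (expNegSeries m - PowerSeries.mk fun n => flipMat m * PowerSeries.coeff n S) *
        (expPosSeries m + PowerSeries.mk fun n => flipMat m * PowerSeries.coeff n S) = 0) :
    r + flipMat m * r * flipMat m = (2 : ℂ) • flipMat m := by
  have hR : (PowerSeries.mk fun n => flipMat m * coeff n S) = C (flipMat m) * S := by
    ext n
    rw [coeff_mk, coeff_C_mul]
  rw [hR] at hHecke
  rw [two_smul, ← two_smul ℕ]
  exact add_mul_mul_eq_two_smul_of_hecke (flipMat_mul_self m) (by simp [expNegSeries])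
    (by simp [expNegSeries]) (by simp [expPosSeries]) (by simp [expPosSeries]) h0 h1 hHecke

/-- If `S(h) = I − r·h + O(h²)`, `R(h) = P·S(h)`, `q = exp(−h)`, and the Hecke condition
`(q·I − R(h))(q⁻¹·I + R(h)) = 0` holds as a formal power series, then `r₁₂ + r₂₁ = 2P`:
the symmetric part of the classical `r`-matrix of a Hecke symmetry equals `P`. -/
theorem classical_rmatrix_symmetric_part_of_hecke (m : ℕ) (hm : 1 ≤ m)
    (r : Matrix (Fin m × Fin m) (Fin m × Fin m) ℂ)
    (S : PowerSeries (Matrix (Fin m × Fin m) (Fin m × Fin m) ℂ))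
    (h0 : PowerSeries.coeff 0 S = 1)
    (h1 : PowerSeries.coeff 1 S = -r)
    (hHecke : (expNegSeries m - PowerSeries.mk fun n => flipMat m * PowerSeries.coeff n S) *
        (expPosSeries m + PowerSeries.mk fun n => flipMat m * PowerSeries.coeff n S) = 0) :
    r + flipMat m * r * flipMat m = (2 : ℂ) • flipMat m :=
  classical_rmatrix_symmetric_part_of_hecke_general m r S h0 h1 hHecke
end
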